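/- arXiv:2210.00816 — 3 statements merged into one kernel-verified Lean document; each statement's English description precedes it below -/
import Mathlib

section
/- For every positive natural number x, β(x) = β(x − f_{γ(x)}) + 1, where γ(x) is the largest index l with f_l ≤ x. -/
/-!
`β(x)` is the length of the Zeckendorf representation of `x`, i.e. the number of steps of the
greedy algorithm that repeatedly subtracts the largest Fibonacci number `F_{γ(x)}`, so the
recurrence is just the first greedy step. Writing `Z` for that length, the greedy representation
is optimal because `Z (y + F_m) ≤ Z y + 1`: then a sum of `k` Fibonacci numbers has `Z ≤ k`.
This inequality is proved by strong induction on `y`; when `y < F_g` for `g = γ(y + F_m)` it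
reduces to `Z u ≤ Z (u + (F_g - F_m))` for `u < F_m`, which is obtained by peeling off
`F_{g-1}` until `g = m + 1`, where it reads `Z u ≤ Z (u + F_{m-1})` for `u < F_m`.
-/

noncomputable def beta (x : ℕ) : ℕ :=
  sInf {k : ℕ | ∃ M : Multiset ℕ,
    (∀ i ∈ M, 2 ≤ i) ∧ (M.map Nat.fib).sum = x ∧ M.card = k}

noncomputable def gamma (x : ℕ) : ℕ := sSup {l : ℕ | Nat.fib l ≤ x}

namespace Nat

theorem greatestFib_eq_of_fib_le_of_lt {n l : ℕ} (hle : fib l ≤ n) (hlt : n < fib (l + 1)) :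
    greatestFib n = l :=
  le_antisymm (Nat.lt_succ_iff.1 (greatestFib_lt.2 hlt)) (le_greatestFib.2 hle)

theorem sub_fib_greatestFib_lt {n : ℕ} (hn : 0 < n) : n - fib (greatestFib n) < n :=
  Nat.sub_lt hn (fib_pos.2 (greatestFib_pos.2 hn))

theorem two_le_of_mem_zeckendorf {n a : ℕ} (h : a ∈ zeckendorf n) : 2 ≤ a := by
  induction n using Nat.strong_induction_on with
  | _ n ih =>
    rcases n.eq_zero_or_pos with rfl | hn
    · simp at h
    rw [zeckendorf_of_pos hn, List.mem_cons] at h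
    rcases h with rfl | h
    · exact le_greatestFib.2 (by rw [fib_two]; exact hn)
    · exact ih _ (sub_fib_greatestFib_lt hn) h

theorem length_zeckendorf_of_pos {n : ℕ} (hn : 0 < n) :
    (zeckendorf n).length = (zeckendorf (n - fib (greatestFib n))).length + 1 := by
  rw [zeckendorf_of_pos hn, List.length_cons]

theorem length_zeckendorf_add_fib_succ {u l : ℕ} (hu : u < fib l) :
    (zeckendorf (u + fib (l + 1))).length = (zeckendorf u).length + 1 := by
  have hlt : u + fib (l + 1) < fib (l + 2) := by rw [fib_add_two]; omega
  rw [length_zeckendorf_of_pos (Nat.add_pos_right _ (fib_pos.2 l.succ_pos)),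
    greatestFib_eq_of_fib_le_of_lt (Nat.le_add_left _ _) hlt, Nat.add_sub_cancel]

theorem length_zeckendorf_le_add_fib {u n : ℕ} (hu : u < fib (n + 1)) :
    (zeckendorf u).length ≤ (zeckendorf (u + fib n)).length := by
  induction n using Nat.strong_induction_on generalizing u with
  | _ n ih =>
    obtain _ | _ | n := n
    · simp
    · simp_all [fib_two]
    replace hu : u < fib (n + 3) := hu
    have h2 : fib (n + 2) = fib n + fib (n + 1) := fib_add_two
    have h3 : fib (n + 3) = fib (n + 1) + fib (n + 2) := fib_add_two
    rcases lt_or_ge u (fib (n + 1)) with hu₁ | hu₁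
    · rw [length_zeckendorf_add_fib_succ hu₁]
      exact Nat.le_succ _
    rcases lt_or_ge u (fib (n + 2)) with hu₂ | hu₂
    · obtain ⟨v, rfl⟩ := Nat.exists_eq_add_of_le' hu₁
      rw [length_zeckendorf_add_fib_succ (by omega), add_assoc, ← h3,
        length_zeckendorf_add_fib_succ (by omega)]
    obtain ⟨v, rfl⟩ := Nat.exists_eq_add_of_le' hu₂
    have hdouble : v + fib (n + 2) + fib (n + 2) = v + fib n + fib (n + 3) := by omega
    rw [hdouble, length_zeckendorf_add_fib_succ (by omega),
      length_zeckendorf_add_fib_succ (by omega)]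
    exact Nat.succ_le_succ (ih n (by omega) (by omega))

theorem length_zeckendorf_le_add_fib_sub_fib {u m g : ℕ} (hu : u < fib m) (hmg : m ≤ g) :
    (zeckendorf u).length ≤ (zeckendorf (u + (fib g - fib m))).length := by
  induction g using Nat.strong_induction_on with
  | _ g ih =>
    rcases hmg.eq_or_lt with rfl | hlt
    · simp
    obtain ⟨k, rfl⟩ : ∃ k, m = k + 1 := Nat.exists_eq_succ_of_ne_zero (by rintro rfl; simp at hu)
    rcases (Nat.succ_le_of_lt hlt).eq_or_lt with rfl | hlt'
    · rw [fib_add_two, Nat.add_sub_cancel]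
      exact length_zeckendorf_le_add_fib hu
    obtain ⟨j, rfl⟩ : ∃ j, g = j + 2 := ⟨g - 2, by omega⟩
    have hmono : fib (k + 1) ≤ fib j := fib_mono (by omega)
    have hsplit : u + (fib (j + 2) - fib (k + 1)) = u + (fib j - fib (k + 1)) + fib (j + 1) := by
      rw [fib_add_two]; omega
    rw [hsplit, length_zeckendorf_add_fib_succ (by omega)]
    exact (ih j (by omega) (by omega)).trans (Nat.le_succ _)

theorem length_zeckendorf_add_fib_le (y m : ℕ) :
    (zeckendorf (y + fib m)).length ≤ (zeckendorf y).length + 1 := by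
  induction y using Nat.strong_induction_on with
  | _ y ih =>
    rcases (y + fib m).eq_zero_or_pos with h0 | hpos
    · simp [h0]
    set g := greatestFib (y + fib m)
    have hg : fib g ≤ y + fib m := fib_greatestFib_le _
    have hfg : 0 < fib g := fib_pos.2 (greatestFib_pos.2 hpos)
    rw [length_zeckendorf_of_pos hpos]
    rcases le_or_gt (fib g) y with hy | hy
    · have hgy : greatestFib y = g :=
        le_antisymm (greatestFib_mono (Nat.le_add_right _ _)) (le_greatestFib.2 hy)
      rw [length_zeckendorf_of_pos (n := y) (by omega), hgy,
        show y + fib m - fib g = y - fib g + fib m by omega]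
      exact Nat.succ_le_succ (ih _ (by omega))
    · have hmg : m ≤ g := le_greatestFib.2 (Nat.le_add_left _ _)
      have hfmg : fib m ≤ fib g := fib_mono hmg
      have key := length_zeckendorf_le_add_fib_sub_fib (u := y + fib m - fib g) (by omega) hmg
      rw [show y + fib m - fib g + (fib g - fib m) = y by omega] at key
      exact Nat.succ_le_succ key

theorem length_zeckendorf_sum_fib_le (M : Multiset ℕ) :
    (zeckendorf (M.map fib).sum).length ≤ Multiset.card M := by
  induction M using Multiset.induction_on with
  | empty => simp
  | cons m M ih =>
    rw [Multiset.map_cons, Multiset.sum_cons, add_comm, Multiset.card_cons]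
    exact (length_zeckendorf_add_fib_le _ m).trans (Nat.succ_le_succ ih)

end Nat

theorem gamma_eq_greatestFib (x : ℕ) : gamma x = Nat.greatestFib x := by
  have hset : {l : ℕ | Nat.fib l ≤ x} = Set.Iic (Nat.greatestFib x) := by
    ext l
    exact Nat.le_greatestFib.symm
  rw [gamma, hset, csSup_Iic]

theorem beta_eq_length_zeckendorf (x : ℕ) : beta x = (Nat.zeckendorf x).length := by
  have hzeck : (Nat.zeckendorf x).length ∈ {k : ℕ | ∃ M : Multiset ℕ,
      (∀ i ∈ M, 2 ≤ i) ∧ (M.map Nat.fib).sum = x ∧ M.card = k} :=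
    ⟨Nat.zeckendorf x, fun _ => Nat.two_le_of_mem_zeckendorf, by simp, rfl⟩
  refine le_antisymm (Nat.sInf_le hzeck) (le_csInf ⟨_, hzeck⟩ ?_)
  rintro k ⟨M, -, rfl, rfl⟩
  exact Nat.length_zeckendorf_sum_fib_le M

theorem beta_recurrence (x : ℕ) (hx : 0 < x) :
    beta x = beta (x - Nat.fib (gamma x)) + 1 := by
  rw [beta_eq_length_zeckendorf, beta_eq_length_zeckendorf, gamma_eq_greatestFib,
    Nat.length_zeckendorf_of_pos hx]
end

section
/- For every natural number x, β(x) ≤ ⌊γ(x)/2⌋, where γ(x) = max{ l : f_l ≤ x } (and γ(0) = 0). -/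
section Gamma

lemma bddAbove_setOf_fib_le (x : ℕ) : BddAbove {l : ℕ | Nat.fib l ≤ x} :=
  ⟨x + 1, fun l hl => (Nat.le_fib_add_one l).trans (Nat.add_le_add_right hl 1)⟩

lemma fib_gamma_le (x : ℕ) : Nat.fib (gamma x) ≤ x :=
  Nat.sSup_mem ⟨0, by simp⟩ (bddAbove_setOf_fib_le x)

lemma le_gamma {x l : ℕ} (h : Nat.fib l ≤ x) : l ≤ gamma x :=
  le_csSup (bddAbove_setOf_fib_le x) h

lemma lt_fib_gamma_add_one (x : ℕ) : x < Nat.fib (gamma x + 1) :=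
  lt_of_not_ge fun h => (le_gamma h).not_gt (Nat.lt_succ_self _)

lemma two_le_gamma {x : ℕ} (hx : 0 < x) : 2 ≤ gamma x :=
  le_gamma (by rwa [Nat.fib_two])

lemma gamma_lt_of_lt_fib {x n : ℕ} (h : x < Nat.fib n) : gamma x < n := by
  by_contra! hle
  exact ((Nat.fib_mono hle).trans (fib_gamma_le x)).not_gt h

lemma gamma_sub_fib_gamma_add_two_le {x : ℕ} (hx : 0 < x) :
    gamma (x - Nat.fib (gamma x)) + 2 ≤ gamma x := by
  obtain ⟨k, hk⟩ : ∃ k, gamma x = k + 2 := ⟨gamma x - 2, by have := two_le_gamma hx; omega⟩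
  have hsucc : Nat.fib (gamma x + 1) = Nat.fib (k + 1) + Nat.fib (gamma x) := by
    rw [hk]
    exact Nat.fib_add_two
  have hrem : x - Nat.fib (gamma x) < Nat.fib (k + 1) := by
    have := lt_fib_gamma_add_one x
    have := fib_gamma_le x
    omega
  have := gamma_lt_of_lt_fib hrem
  omega

end Gamma

section Beta

lemma beta_le_card {M : Multiset ℕ} (hM : ∀ i ∈ M, 2 ≤ i) : beta (M.map Nat.fib).sum ≤ M.card :=
  Nat.sInf_le ⟨M, hM, rfl, rfl⟩

lemma exists_multiset_card_eq_beta (x : ℕ) :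
    ∃ M : Multiset ℕ, (∀ i ∈ M, 2 ≤ i) ∧ (M.map Nat.fib).sum = x ∧ M.card = beta x :=
  Nat.sInf_mem (s := {k | ∃ M : Multiset ℕ,
      (∀ i ∈ M, 2 ≤ i) ∧ (M.map Nat.fib).sum = x ∧ M.card = k})
    ⟨x, Multiset.replicate x 2, fun i hi => (Multiset.eq_of_mem_replicate hi).ge, by simp, by simp⟩

lemma beta_zero : beta 0 = 0 :=
  Nat.eq_zero_of_le_zero (by simpa using beta_le_card (M := 0) (by simp))

lemma beta_le_beta_sub_fib_add_one {x l : ℕ} (hl : 2 ≤ l) (h : Nat.fib l ≤ x) :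
    beta x ≤ beta (x - Nat.fib l) + 1 := by
  obtain ⟨M, hM, hsum, hcard⟩ := exists_multiset_card_eq_beta (x - Nat.fib l)
  have hlM : ∀ i ∈ l ::ₘ M, 2 ≤ i := by
    simpa only [Multiset.mem_cons, forall_eq_or_imp] using ⟨hl, hM⟩
  have key := beta_le_card hlM
  rwa [Multiset.map_cons, Multiset.sum_cons, hsum, Nat.add_sub_cancel' h, Multiset.card_cons,
    hcard] at key

end Beta

theorem beta_le_half_gamma (x : ℕ) : beta x ≤ gamma x / 2 := by
  induction x using Nat.strong_induction_on with
  | _ x ih =>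
    rcases Nat.eq_zero_or_pos x with rfl | hx
    · simp [beta_zero]
    have h2 := two_le_gamma hx
    have hstep := beta_le_beta_sub_fib_add_one h2 (fib_gamma_le x)
    have hrem := ih (x - Nat.fib (gamma x)) (Nat.sub_lt hx (Nat.fib_pos.mpr (by omega)))
    have hdrop := gamma_sub_fib_gamma_add_two_le hx
    omega
end

section
/- For a ≥ 3, the genus of S(a) equals Σ_{i=1}^{⌊(a−1)/2⌋} i·C(a−1−i, i), where C denotes the binomial coefficient. -/
/-! Let `Z r` be the number of terms of the Zeckendorf representation of `r`. Adding one
Fibonacci number raises `Z` by at most one, so `Z` is subadditive and no representation of `r`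
as a sum of Fibonacci numbers is shorter than Zeckendorf's. Since each generator of `S a` is
`F_a` plus a Fibonacci number, `m ∈ S a` iff `Z (m % F_a) ≤ m / F_a`: the right-hand side is
closed under addition because also `Z r ≤ Z (r + F_a)` for `r < F_a`. So the gaps with residue
`r` are the `Z r` numbers `q F_a + r` with `q < Z r`, and the genus is `∑_{r < F_a} Z r`.
Splitting `[0, F_{n+3})` at `F_{n+2}` shows that `A_n = ∑_{r < F_n} Z r` satisfies
`A_{n+3} = A_{n+2} + A_{n+1} + F_{n+1}`, as do the weighted binomial sums by Pascal's rule and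
`F_{n+1} = ∑ C(n - i, i)`. -/

def S (a : ℕ) : AddSubmonoid ℕ :=
  AddSubmonoid.closure {m : ℕ | ∃ n : ℕ, m = Nat.fib a + Nat.fib n}

open Nat Finset

def zeckendorfLength (n : ℕ) : ℕ := (zeckendorf n).length

@[simp] lemma zeckendorfLength_zero : zeckendorfLength 0 = 0 := by simp [zeckendorfLength]

lemma greatestFib_fib_add {b u : ℕ} (hu : u < fib (b + 1)) :
    greatestFib (fib (b + 2) + u) = b + 2 := by
  have hfib : fib (b + 3) = fib (b + 1) + fib (b + 2) := fib_add_two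
  have := le_greatestFib.2 (le_add_right (fib (b + 2)) u)
  have := greatestFib_lt.2 (show fib (b + 2) + u < fib (b + 3) by omega)
  omega

lemma zeckendorfLength_fib_add {b u : ℕ} (hu : u < fib (b + 1)) :
    zeckendorfLength (fib (b + 2) + u) = zeckendorfLength u + 1 := by
  simp [zeckendorfLength, greatestFib_fib_add hu]

lemma zeckendorfLength_eq_sub_add_one {b x : ℕ} (h₁ : fib (b + 2) ≤ x)
    (h₂ : x < fib (b + 3)) :
    zeckendorfLength x = zeckendorfLength (x - fib (b + 2)) + 1 := by
  have hfib : fib (b + 3) = fib (b + 1) + fib (b + 2) := fib_add_two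
  rw [← zeckendorfLength_fib_add (b := b) (by omega), Nat.add_sub_cancel' h₁]

lemma zeckendorfLength_fib_le (n : ℕ) : zeckendorfLength (fib n) ≤ 1 := by
  match n with
  | 0 => simp
  | 1 => simpa using (zeckendorfLength_fib_add (b := 0) (u := 0) (by simp)).le
  | m + 2 => simpa using (zeckendorfLength_fib_add (b := m) (u := 0) (fib_pos.2 m.succ_pos)).le

lemma exists_eq_fib_add {x : ℕ} (hx : x ≠ 0) :
    ∃ c u, x = fib (c + 2) + u ∧ u < fib (c + 1) := by
  have h₂ : 2 ≤ greatestFib x := le_greatestFib.2 (by simpa using Nat.one_le_iff_ne_zero.2 hx)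
  obtain ⟨c, hc⟩ : ∃ c, greatestFib x = c + 2 := ⟨greatestFib x - 2, by omega⟩
  have hle : fib (c + 2) ≤ x := hc ▸ fib_greatestFib_le x
  have hlt : x < fib (c + 3) := by simpa [hc] using lt_fib_greatestFib_add_one x
  have hfib : fib (c + 3) = fib (c + 1) + fib (c + 2) := fib_add_two
  exact ⟨c, x - fib (c + 2), by omega, by omega⟩

lemma zeckendorfLength_fib_add_carry {d u n : ℕ} (hu : u < fib (d + 2)) (hn : n ≤ d + 1)
    (hcarry : fib (d + 2) ≤ u + fib n) :
    zeckendorfLength (fib (d + 3) + u + fib n) = zeckendorfLength (u + fib n) := by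
  have : fib n ≤ fib (d + 1) := fib_mono hn
  have f₃ : fib (d + 3) = fib (d + 1) + fib (d + 2) := fib_add_two
  have f₄ : fib (d + 4) = fib (d + 2) + fib (d + 3) := fib_add_two
  rw [zeckendorfLength_eq_sub_add_one (b := d) (x := u + fib n) hcarry (by omega),
    show fib (d + 3) + u + fib n = fib (d + 4) + (u + fib n - fib (d + 2)) by omega,
    zeckendorfLength_fib_add (b := d + 2) (show _ < fib (d + 3) by omega)]

lemma zeckendorfLength_add_fib_le (x n : ℕ) :
    zeckendorfLength (x + fib n) ≤ zeckendorfLength x + 1 := by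
  induction x using Nat.strong_induction_on generalizing n with
  | _ x ih =>
  obtain rfl | hx := eq_or_ne x 0
  · simpa using zeckendorfLength_fib_le n
  obtain rfl | hn₀ := eq_or_ne n 0
  · simp
  obtain ⟨c, u, rfl, hu⟩ := exists_eq_fib_add hx
  have ih_u : ∀ k, zeckendorfLength (u + fib k) ≤ zeckendorfLength u + 1 :=
    ih u (by have := fib_pos.2 (by omega : 0 < c + 2); omega)
  have f₂ : fib (c + 2) = fib c + fib (c + 1) := fib_add_two
  have f₃ : fib (c + 3) = fib (c + 1) + fib (c + 2) := fib_add_two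
  rw [zeckendorfLength_fib_add hu]
  obtain hn | rfl | rfl | rfl | hn :
      c + 4 ≤ n ∨ n = c + 3 ∨ n = c + 2 ∨ n = c + 1 ∨ n ≤ c := by omega
  · obtain ⟨k, rfl⟩ : ∃ k, n = k + 2 := ⟨n - 2, by omega⟩
    have : fib (c + 3) ≤ fib (k + 1) := fib_mono (by omega)
    rw [add_comm (fib (c + 2) + u), zeckendorfLength_fib_add (b := k) (by omega),
      zeckendorfLength_fib_add hu]
  · have f₄ : fib (c + 4) = fib (c + 2) + fib (c + 3) := fib_add_two
    rw [show fib (c + 2) + u + fib (c + 3) = fib (c + 4) + u by omega,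
      zeckendorfLength_fib_add (b := c + 2) (show u < fib (c + 3) by omega)]
    omega
  · rw [show fib (c + 2) + u + fib (c + 2) = fib (c + 3) + (u + fib c) by omega,
      zeckendorfLength_fib_add (b := c + 1) (show u + fib c < fib (c + 2) by omega)]
    exact Nat.add_le_add_right (ih_u c) 1
  · rw [show fib (c + 2) + u + fib (c + 1) = fib (c + 3) + u by omega,
      zeckendorfLength_fib_add (b := c + 1) (show u < fib (c + 2) by omega)]
    omega
  by_cases hcarry : u + fib n < fib (c + 1)
  · rw [add_assoc, zeckendorfLength_fib_add hcarry]
    exact Nat.add_le_add_right (ih_u n) 1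
  obtain ⟨d, rfl⟩ : ∃ d, c = d + 1 := ⟨c - 1, by omega⟩
  rw [zeckendorfLength_fib_add_carry hu hn (not_lt.1 hcarry)]
  exact (ih_u n).trans (le_add_right _ _)

lemma zeckendorfLength_add_sum_fib_le (x : ℕ) (l : List ℕ) :
    zeckendorfLength (x + (l.map fib).sum) ≤ zeckendorfLength x + l.length := by
  induction l generalizing x with
  | nil => simp
  | cons i l ih =>
    have := zeckendorfLength_add_fib_le (x + (l.map fib).sum) i
    have := ih x
    simp only [List.map_cons, List.sum_cons, List.length_cons]
    rw [add_left_comm, add_comm (fib i)]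
    omega

lemma zeckendorfLength_add_le (x y : ℕ) :
    zeckendorfLength (x + y) ≤ zeckendorfLength x + zeckendorfLength y := by
  have := zeckendorfLength_add_sum_fib_le x (zeckendorf y)
  rwa [sum_zeckendorf_fib] at this

lemma zeckendorfLength_le_add_fib {r a : ℕ} (hr : r < fib a) :
    zeckendorfLength r ≤ zeckendorfLength (r + fib a) := by
  rcases a with _ | _ | _ | m
  · simp_all
  · simp_all
  · simp_all [show r = 0 by simp_all]
  replace hr : r < fib (m + 3) := hr
  have f₃ : fib (m + 3) = fib (m + 1) + fib (m + 2) := fib_add_two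
  have f₄ : fib (m + 4) = fib (m + 2) + fib (m + 3) := fib_add_two
  by_cases hr' : r < fib (m + 2)
  · rw [add_comm, zeckendorfLength_fib_add (b := m + 1) hr']
    exact le_add_right _ _
  have : fib (m + 1) ≤ fib (m + 3) := fib_mono (by omega)
  rw [zeckendorfLength_eq_sub_add_one (b := m) (not_lt.1 hr') hr,
    show r + fib (m + 3) = fib (m + 4) + (r - fib (m + 2)) by omega,
    zeckendorfLength_fib_add (b := m + 2) (show _ < fib (m + 3) by omega)]

lemma zeckendorfLength_mod_le_div_add {a m n : ℕ} (ha : a ≠ 0)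
    (hm : zeckendorfLength (m % fib a) ≤ m / fib a)
    (hn : zeckendorfLength (n % fib a) ≤ n / fib a) :
    zeckendorfLength ((m + n) % fib a) ≤ (m + n) / fib a := by
  have hF : 0 < fib a := fib_pos.2 (Nat.pos_of_ne_zero ha)
  have hsub := zeckendorfLength_add_le (m % fib a) (n % fib a)
  rw [Nat.add_div hF, Nat.add_mod]
  split_ifs with h
  · have hlt : m % fib a + n % fib a - fib a < fib a := by
      have := mod_lt m hF; have := mod_lt n hF; omega
    have hmono := zeckendorfLength_le_add_fib hlt
    rw [Nat.sub_add_cancel h] at hmono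
    rw [mod_eq_sub_mod h, mod_eq_of_lt hlt]
    omega
  · rw [mod_eq_of_lt (not_le.1 h)]
    omega

lemma zeckendorfLength_add_mul_mod_le_div {a q r : ℕ} (hr : r < fib a)
    (h : zeckendorfLength r ≤ q) :
    zeckendorfLength ((r + fib a * q) % fib a) ≤ (r + fib a * q) / fib a := by
  rwa [add_mul_mod_self_left, mod_eq_of_lt hr, add_mul_div_left _ _ (r.zero_le.trans_lt hr),
    div_eq_of_lt hr, zero_add]

lemma zeckendorfLength_fib_mod_le_div {a n : ℕ} (ha : 3 ≤ a) (hn : a ≤ n) :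
    zeckendorfLength (fib n % fib a) ≤ fib n / fib a := by
  obtain ⟨b, rfl⟩ : ∃ b, a = b + 3 := ⟨a - 3, by omega⟩
  suffices ∀ k,
      zeckendorfLength (fib (b + 3 + k) % fib (b + 3)) ≤ fib (b + 3 + k) / fib (b + 3) ∧
      zeckendorfLength (fib (b + 3 + k + 1) % fib (b + 3)) ≤ fib (b + 3 + k + 1) / fib (b + 3) by
    simpa [Nat.add_sub_cancel' hn] using (this (n - (b + 3))).1
  intro k
  induction k with
  | zero =>
    have hlt : fib (b + 2) < fib (b + 3) := fib_lt_fib_succ (by omega)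
    refine ⟨by simp, ?_⟩
    rw [add_zero, fib_add_one (by omega), show b + 3 - 1 = b + 2 from rfl]
    simpa using zeckendorfLength_add_mul_mod_le_div (q := 1) hlt (zeckendorfLength_fib_le _)
  | succ k ih =>
    refine ⟨ih.2, ?_⟩
    rw [show b + 3 + (k + 1) + 1 = b + 3 + k + 2 from rfl, fib_add_two]
    exact zeckendorfLength_mod_le_div_add (by omega) ih.1 ih.2

lemma zeckendorfLength_mod_le_div_of_mem_S {a m : ℕ} (ha : 3 ≤ a) (hm : m ∈ S a) :
    zeckendorfLength (m % fib a) ≤ m / fib a := by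
  induction hm using AddSubmonoid.closure_induction with
  | zero => simp
  | add x y _ _ hx hy => exact zeckendorfLength_mod_le_div_add (by omega) hx hy
  | mem x hx =>
    obtain ⟨n, rfl⟩ := hx
    rcases lt_or_ge n a with hn | hn
    · have hlt : fib n < fib a := by
        obtain ⟨b, rfl⟩ : ∃ b, a = b + 3 := ⟨a - 3, by omega⟩
        exact (fib_mono (show n ≤ b + 2 by omega)).trans_lt (fib_lt_fib_succ (by omega))
      rw [add_comm]
      simpa using zeckendorfLength_add_mul_mod_le_div (q := 1) hlt (zeckendorfLength_fib_le n)
    · exact zeckendorfLength_mod_le_div_add (by omega)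
        (zeckendorfLength_fib_mod_le_div ha le_rfl) (zeckendorfLength_fib_mod_le_div ha hn)

lemma length_mul_fib_add_sum_fib_mem_S (a : ℕ) (l : List ℕ) :
    l.length * fib a + (l.map fib).sum ∈ S a := by
  induction l with
  | nil => simp
  | cons i l ih =>
    rw [List.length_cons, List.map_cons, List.sum_cons,
      show (l.length + 1) * fib a + (fib i + (l.map fib).sum) =
        (fib a + fib i) + (l.length * fib a + (l.map fib).sum) by ring]
    exact add_mem (AddSubmonoid.subset_closure ⟨i, rfl⟩) ih

lemma mul_fib_add_mem_S {a q r : ℕ} (h : zeckendorfLength r ≤ q) : q * fib a + r ∈ S a := by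
  have := length_mul_fib_add_sum_fib_mem_S a
    (zeckendorf r ++ List.replicate (q - zeckendorfLength r) 0)
  rwa [List.length_append, List.length_replicate, List.map_append, List.sum_append,
    sum_zeckendorf_fib, ← zeckendorfLength, Nat.add_sub_cancel' h, List.map_replicate, fib_zero,
    List.sum_replicate, smul_zero, add_zero] at this

lemma mem_S_iff {a m : ℕ} (ha : 3 ≤ a) :
    m ∈ S a ↔ zeckendorfLength (m % fib a) ≤ m / fib a := by
  refine ⟨zeckendorfLength_mod_le_div_of_mem_S ha, fun h => ?_⟩
  rw [← div_add_mod' m (fib a)]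
  exact mul_fib_add_mem_S h

lemma ncard_setOf_div_lt_mod {d : ℕ} (hd : 0 < d) (f : ℕ → ℕ) :
    {m | m / d < f (m % d)}.ncard = ∑ r ∈ range d, f r := by
  have hdm : ∀ q r, r < d → (q * d + r) / d = q ∧ (q * d + r) % d = r := fun q r hr => by
    rw [add_comm, add_mul_div_right _ _ hd, div_eq_of_lt hr, zero_add, add_mul_mod_self_right,
      mod_eq_of_lt hr]
    exact ⟨rfl, rfl⟩
  have himage : {m | m / d < f (m % d)} =
      (fun p : (_ : ℕ) × ℕ => p.2 * d + p.1) '' ↑((range d).sigma fun r => range (f r)) := by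
    ext m
    simp only [Set.mem_ofPred_eq, Set.mem_image, coe_sigma, Set.mem_sigma_iff, coe_range,
      Set.mem_Iio, Sigma.exists]
    constructor
    · exact fun h => ⟨m % d, m / d, ⟨mod_lt m hd, h⟩, div_add_mod' m d⟩
    · rintro ⟨r, q, ⟨hr, hq⟩, rfl⟩
      rwa [(hdm q r hr).1, (hdm q r hr).2]
  rw [himage, Set.InjOn.ncard_image, Set.ncard_coe_finset, card_sigma]
  · simp
  · rintro ⟨r, q⟩ hp ⟨r', q'⟩ hp' h
    simp only [coe_sigma, Set.mem_sigma_iff, coe_range, Set.mem_Iio] at hp hp'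
    obtain ⟨hq, hr⟩ := hdm q r hp.1
    obtain ⟨hq', hr'⟩ := hdm q' r' hp'.1
    have hdiv := congrArg (· / d) h
    have hmod := congrArg (· % d) h
    simp only [hq, hr, hq', hr'] at hdiv hmod
    rw [hdiv, hmod]

lemma sum_antidiagonal_mul_choose_add_two (n : ℕ) :
    ∑ p ∈ antidiagonal (n + 2), p.2 * p.1.choose p.2 =
      ∑ p ∈ antidiagonal (n + 1), p.2 * p.1.choose p.2 +
        ∑ p ∈ antidiagonal n, p.2 * p.1.choose p.2 + fib (n + 1) := by
  rw [Nat.sum_antidiagonal_succ', Nat.sum_antidiagonal_succ, Nat.sum_antidiagonal_succ' (n := n),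
    fib_succ_eq_sum_choose]
  simp only [choose_zero_succ, choose_succ_succ, mul_zero, zero_mul, zero_add]
  rw [← sum_add_distrib, ← sum_add_distrib]
  exact sum_congr rfl fun p _ => by ring

lemma sum_Icc_mul_choose_eq_sum_antidiagonal (m : ℕ) :
    ∑ i ∈ Icc 1 (m / 2), i * (m - i).choose i =
      ∑ p ∈ antidiagonal m, p.2 * p.1.choose p.2 := by
  rw [← Nat.sum_antidiagonal_swap]
  simp only [Prod.fst_swap, Prod.snd_swap]
  rw [Nat.sum_antidiagonal_eq_sum_range_succ (fun i j => i * j.choose i)]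
  refine sum_subset (fun i hi => ?_) (fun i hi hni => ?_)
  · simp only [mem_Icc, succ_eq_add_one, mem_range] at hi ⊢
    omega
  · simp only [succ_eq_add_one, mem_range, mem_Icc, not_and, not_le] at hi hni
    rcases Nat.eq_zero_or_pos i with rfl | hi0
    · simp
    · rw [choose_eq_zero_of_lt (by omega), mul_zero]

lemma sum_range_fib_add_three_zeckendorfLength (n : ℕ) :
    ∑ r ∈ range (fib (n + 3)), zeckendorfLength r =
      ∑ r ∈ range (fib (n + 2)), zeckendorfLength r +
        ∑ r ∈ range (fib (n + 1)), zeckendorfLength r + fib (n + 1) := by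
  rw [show fib (n + 3) = fib (n + 2) + fib (n + 1) from (fib_add_two).trans (add_comm _ _),
    sum_range_add, add_assoc,
    sum_congr rfl fun u hu => zeckendorfLength_fib_add (mem_range.1 hu), sum_add_distrib]
  simp

lemma sum_range_fib_zeckendorfLength (n : ℕ) :
    ∑ r ∈ range (fib (n + 2)), zeckendorfLength r =
      ∑ p ∈ antidiagonal (n + 1), p.2 * p.1.choose p.2 := by
  induction n using Nat.twoStepInduction with
  | zero => simp [Nat.sum_antidiagonal_succ, fib_add_two]
  | one =>
    have h₁ : zeckendorfLength 1 = 1 := by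
      simpa using zeckendorfLength_fib_add (b := 0) (u := 0) (by simp)
    simp [Nat.sum_antidiagonal_succ, sum_range_succ, fib_add_two, h₁]
  | more n ih₀ ih₁ =>
    rw [sum_range_fib_add_three_zeckendorfLength (n + 1), ih₁, ih₀,
      show n + 2 + 1 = n + 1 + 2 from rfl, sum_antidiagonal_mul_choose_add_two (n + 1)]

theorem genus_S_sum (a : ℕ) (ha : 3 ≤ a) :
    {m : ℕ | m ∉ S a}.ncard =
      ∑ i ∈ Finset.Icc 1 ((a - 1) / 2), i * Nat.choose (a - 1 - i) i := by
  obtain ⟨n, rfl⟩ : ∃ n, a = n + 2 := ⟨a - 2, by omega⟩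
  calc {m : ℕ | m ∉ S (n + 2)}.ncard
      = {m | m / fib (n + 2) < zeckendorfLength (m % fib (n + 2))}.ncard := by
        simp_rw [mem_S_iff ha, not_le]
    _ = ∑ r ∈ range (fib (n + 2)), zeckendorfLength r :=
        ncard_setOf_div_lt_mod (fib_pos.2 (by omega)) _
    _ = ∑ p ∈ antidiagonal (n + 1), p.2 * p.1.choose p.2 := sum_range_fib_zeckendorfLength n
    _ = _ := (sum_Icc_mul_choose_eq_sum_antidiagonal (n + 1)).symm
end
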